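/- Let a, b ≥ 1 and let A, B be disjoint finite sets with |A| = a, |B| = b. With good colorings defined as before, Σ_{good c} t^{g(c)+w(c)} = Σ_{i=0}^{min(a,b)} C(2i,i)·C(a,i)·C(b,i)·t^i·(1+t)^{a+b-2i}. -/

import Mathlib

/-!
Give the colours weights `w : κ → S`. Marking a colour `c` by a variable `X`, the weighted sum
over all colourings of an `n`-set is `(w c X + ∑_{d ≠ c} w d)^n`, so by the binomial theorem the
colourings with `k` points of colour `c` weigh `C(n,k) (w c)^k (∑_{d ≠ c} w d)^(n-k)`. Marking a
second colour in the same way, those with `j` points of colour `c₁` and `k` of colour `c₂` weigh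
`C(n,j) C(n-j,k) (w c₁)^j (w c₂)^k W^(n-j-k)`, `W` being the weight of the remaining colours.
A good colouring is a pair of colourings of `A` and `B` with `(#R, #G)` equal to `(j, k)` on `A`
and `(k, j)` on `B`; the product of the two weights is
`C(a,i) C(b,i) C(i,j) C(i,k) (w R w G)^i W^(a+b-2i)` with `i = j + k`, and summing over `j` is
Vandermonde's identity `∑ C(i,j) C(i,k) = C(2i,i)`. The weights `1, t, t, 1` on `R, G, W, K`
give the theorem, with `W = 1 + t`.
-/

open Polynomial Finset

/-- Four colors: red, green, white, black. -/
inductive Col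
  | R | G | W | K
deriving DecidableEq

instance instFintypeCol : Fintype Col :=
  ⟨{Col.R, Col.G, Col.W, Col.K}, fun x => by cases x <;> decide⟩

/-- A coloring of `A ⊕ B` is good if the number of red elements of `A` equals the number of
green elements of `B` and the number of green elements of `A` equals the number of red
elements of `B`. -/
def IsGood {A B : Type} [Fintype A] [Fintype B] (c : A ⊕ B → Col) : Prop :=
  (Finset.univ.filter (fun x : A => c (Sum.inl x) = Col.R)).card
      = (Finset.univ.filter (fun y : B => c (Sum.inr y) = Col.G)).card ∧
  (Finset.univ.filter (fun x : A => c (Sum.inl x) = Col.G)).card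
      = (Finset.univ.filter (fun y : B => c (Sum.inr y) = Col.R)).card

instance {A B : Type} [Fintype A] [Fintype B] (c : A ⊕ B → Col) :
    Decidable (IsGood c) := by unfold IsGood; infer_instance

theorem Nat.choose_mul_choose_sub (n j k : ℕ) :
    n.choose j * (n - j).choose k = n.choose (j + k) * (j + k).choose j := by
  rw [Nat.choose_mul (Nat.le_add_right j k), Nat.add_sub_cancel_left]

section ColorCounting

variable {α κ S : Type*} [Fintype α] [CommSemiring S]

theorem Polynomial.coeff_C_mul_X_add_C_pow (a b : S) (n k : ℕ) :
    ((C a * X + C b) ^ n).coeff k = n.choose k * a ^ k * b ^ (n - k) := by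
  have hterm (m : ℕ) : (C a * X) ^ m * C b ^ (n - m) * (n.choose m : S[X])
      = C (a ^ m * b ^ (n - m) * n.choose m) * X ^ m := by
    simp only [map_mul, map_pow, map_natCast]; ring
  simp only [add_pow, hterm, finsetSum_coeff, coeff_C_mul_X_pow, sum_ite_eq, mem_range]
  split_ifs with hk
  · ring
  · rw [Nat.choose_eq_zero_of_lt (by omega), Nat.cast_zero, zero_mul, zero_mul]

theorem prod_C_mul_X_pow_ite (g : α → S) (p : α → Prop) [DecidablePred p] :
    ∏ x, C (g x) * X ^ (if p x then 1 else 0) = C (∏ x, g x) * X ^ #{x | p x} := by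
  rw [prod_mul_distrib, map_prod, prod_pow_eq_pow_sum, card_filter]

theorem card_filter_add_card_filter_le [DecidableEq α] [DecidableEq κ] {c₁ c₂ : κ} (h : c₁ ≠ c₂)
    (f : α → κ) :
    #{x | f x = c₁} + #{x | f x = c₂} ≤ Fintype.card α := by
  rw [← card_union_of_disjoint (disjoint_filter.2 fun x _ h₁ h₂ => h (h₁.symm.trans h₂))]
  exact card_le_univ _

theorem sum_C_mul_X_pow_ite_eq [DecidableEq κ] {s : Finset κ} {c : κ} (hc : c ∈ s) (w : κ → S) :
    ∑ d ∈ s, C (w d) * X ^ (if d = c then 1 else 0)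
      = C (w c) * X + C (∑ d ∈ s.erase c, w d) := by
  rw [← add_sum_erase s _ hc, if_pos rfl, pow_one, map_sum]
  congr 1
  exact sum_congr rfl fun d hd => by rw [if_neg (ne_of_mem_erase hd), pow_zero, mul_one]

variable [DecidableEq α] [Fintype κ] [DecidableEq κ]

theorem sum_prod_filter_card_eq (c : κ) (w : κ → S) (k : ℕ) :
    ∑ f : α → κ with #{x | f x = c} = k, ∏ x, w (f x)
      = (Fintype.card α).choose k * w c ^ k
        * (∑ d ∈ univ.erase c, w d) ^ (Fintype.card α - k) := by
  have h := congrArg (coeff · k) (Fintype.prod_sum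
    (fun (_ : α) (d : κ) => C (w d) * X ^ (if d = c then 1 else 0)))
  simp only [prod_const, card_univ, sum_C_mul_X_pow_ite_eq (mem_univ c), coeff_C_mul_X_add_C_pow,
    prod_C_mul_X_pow_ite, finsetSum_coeff, coeff_C_mul_X_pow, @eq_comm _ k] at h
  rw [h, sum_filter]

theorem sum_prod_filter_card_eq_card_eq {c₁ c₂ : κ} (h : c₁ ≠ c₂) (w : κ → S) (j k : ℕ) :
    ∑ f : α → κ with #{x | f x = c₁} = j ∧ #{x | f x = c₂} = k, ∏ x, w (f x)
      = (Fintype.card α).choose j * (Fintype.card α - j).choose k * w c₁ ^ j * w c₂ ^ k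
        * (∑ d ∈ (univ.erase c₁).erase c₂, w d) ^ (Fintype.card α - j - k) := by
  have hmark := congrArg (coeff · k) (sum_prod_filter_card_eq (α := α) c₁
    (fun d => C (w d) * X ^ (if d = c₂ then 1 else 0)) j)
  simp only [if_neg h, pow_zero, mul_one,
    sum_C_mul_X_pow_ite_eq (mem_erase.2 ⟨h.symm, mem_univ c₂⟩), prod_C_mul_X_pow_ite,
    finsetSum_coeff, ← C_eq_natCast, ← C_pow, ← C_mul, coeff_C_mul, coeff_C_mul_X_add_C_pow,
    coeff_X_pow, mul_ite, mul_one, mul_zero, @eq_comm _ k] at hmark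
  rw [← filter_filter, sum_filter, hmark]
  ring

variable {β : Type*} [Fintype β] [DecidableEq β]

def IsCrossBalanced (c₁ c₂ : κ) (c : α ⊕ β → κ) : Prop :=
  #{x | c (.inl x) = c₁} = #{y | c (.inr y) = c₂} ∧ #{x | c (.inl x) = c₂} = #{y | c (.inr y) = c₁}

instance (c₁ c₂ : κ) : DecidablePred (IsCrossBalanced (α := α) (β := β) c₁ c₂) :=
  fun _ => inferInstanceAs (Decidable (_ ∧ _))

theorem sum_prod_crossBalanced_eq_sum_antidiagonal {c₁ c₂ : κ} (h : c₁ ≠ c₂) (w : κ → S) :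
    ∑ c : α ⊕ β → κ with IsCrossBalanced c₁ c₂ c, ∏ z, w (c z)
      = ∑ i ∈ range (min (Fintype.card α) (Fintype.card β) + 1), ∑ q ∈ antidiagonal i,
          (∑ f : α → κ with #{x | f x = c₁} = q.1 ∧ #{x | f x = c₂} = q.2, ∏ x, w (f x))
            * ∑ g : β → κ with #{y | g y = c₂} = q.1 ∧ #{y | g y = c₁} = q.2, ∏ y, w (g y) := by
  let count₁ (p : (α → κ) × (β → κ)) : ℕ × ℕ := (#{x | p.1 x = c₁}, #{x | p.1 x = c₂})
  let count₂ (p : (α → κ) × (β → κ)) : ℕ × ℕ := (#{y | p.2 y = c₂}, #{y | p.2 y = c₁})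
  have hsplit : ∑ c : α ⊕ β → κ with IsCrossBalanced c₁ c₂ c, ∏ z, w (c z)
      = ∑ p : (α → κ) × (β → κ) with count₁ p = count₂ p, (∏ x, w (p.1 x)) * ∏ y, w (p.2 y) := by
    refine sum_equiv (Equiv.sumArrowEquivProdArrow α β κ) (fun c => ?_) fun c _ => ?_
    · rw [mem_filter, mem_filter]
      simp only [mem_univ, true_and, IsCrossBalanced, Equiv.sumArrowEquivProdArrow,
        Equiv.coe_fn_mk, Function.comp_apply, Prod.mk.injEq, count₁, count₂]
    · exact Fintype.prod_sum_type _
  rw [hsplit, ← sum_fiberwise_of_maps_to (g := fun p => (count₁ p).1 + (count₁ p).2)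
    (t := range (min (Fintype.card α) (Fintype.card β) + 1))]
  · refine sum_congr rfl fun i _ => ?_
    rw [← sum_fiberwise_of_maps_to (g := count₁) (t := antidiagonal i)
      (fun p hp => mem_antidiagonal.2 (mem_filter.1 hp).2)]
    refine sum_congr rfl fun q hq => ?_
    rw [sum_mul_sum, ← sum_product']
    refine sum_congr (Finset.ext fun p => ?_) fun _ _ => rfl
    rw [HasAntidiagonal.mem_antidiagonal] at hq
    simp only [mem_filter, mem_univ, true_and, mem_product, count₁, count₂, Prod.ext_iff]
    omega
  · intro p hp
    have hA := card_filter_add_card_filter_le h p.1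
    have hB := card_filter_add_card_filter_le h.symm p.2
    simp only [mem_filter, mem_range, count₁, count₂, Prod.ext_iff] at hp ⊢
    omega

theorem sum_prod_crossBalanced {c₁ c₂ : κ} (h : c₁ ≠ c₂) (w : κ → S) :
    ∑ c : α ⊕ β → κ with IsCrossBalanced c₁ c₂ c, ∏ z, w (c z)
      = ∑ i ∈ range (min (Fintype.card α) (Fintype.card β) + 1),
          ((2 * i).choose i * (Fintype.card α).choose i * (Fintype.card β).choose i : ℕ)
            * (w c₁ * w c₂) ^ i * (∑ d ∈ (univ.erase c₁).erase c₂, w d)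
              ^ (Fintype.card α + Fintype.card β - 2 * i) := by
  set a := Fintype.card α
  set b := Fintype.card β
  set W := ∑ d ∈ (univ.erase c₁).erase c₂, w d
  rw [sum_prod_crossBalanced_eq_sum_antidiagonal h]
  refine sum_congr rfl fun i hi => ?_
  have hia : i ≤ a ∧ i ≤ b := by rw [mem_range] at hi; omega
  have hterm : ∀ q ∈ antidiagonal i,
      (∑ f : α → κ with #{x | f x = c₁} = q.1 ∧ #{x | f x = c₂} = q.2, ∏ x, w (f x))
        * (∑ g : β → κ with #{y | g y = c₂} = q.1 ∧ #{y | g y = c₁} = q.2, ∏ y, w (g y))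
      = (i.choose q.1 * i.choose q.2 : ℕ) * ((a.choose i * b.choose i : ℕ) * (w c₁ * w c₂) ^ i
          * W ^ (a + b - 2 * i)) := by
    rintro ⟨j, k⟩ hq
    rw [HasAntidiagonal.mem_antidiagonal] at hq
    subst hq
    rw [sum_prod_filter_card_eq_card_eq h, sum_prod_filter_card_eq_card_eq h.symm,
      erase_right_comm (a := c₂)]
    calc _ = ((a.choose j * (a - j).choose k : ℕ) * (b.choose j * (b - j).choose k : ℕ) : S)
          * ((w c₁ * w c₂) ^ (j + k) * W ^ (a - j - k) * W ^ (b - j - k)) := by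
          push_cast; ring
      _ = ((a.choose (j + k) * (j + k).choose j : ℕ)
            * (b.choose (j + k) * (j + k).choose k : ℕ) : S)
          * ((w c₁ * w c₂) ^ (j + k) * W ^ (a - j - k) * W ^ (b - j - k)) := by
          rw [Nat.choose_mul_choose_sub, Nat.choose_mul_choose_sub, Nat.choose_symm_add]
      _ = _ := by
          rw [show a + b - 2 * (j + k) = (a - j - k) + (b - j - k) by omega, pow_add]
          push_cast; ring
  rw [sum_congr rfl hterm, ← sum_mul, ← Nat.cast_sum, ← Nat.add_choose_eq, ← two_mul]
  push_cast; ring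

end ColorCounting

noncomputable def greenWhiteWeight : Col → ℤ[X]
  | .G | .W => X
  | .R | .K => 1

theorem prod_greenWhiteWeight {α : Type*} [Fintype α] (f : α → Col) :
    ∏ x, greenWhiteWeight (f x) = X ^ (#{x | f x = .G} + #{x | f x = .W}) := by
  rw [card_filter, card_filter, ← sum_add_distrib, ← prod_pow_eq_pow_sum]
  exact prod_congr rfl fun x _ => by cases f x <;> simp [greenWhiteWeight]

theorem stmt_10_general (a b : ℕ)
    (A B : Type) [Fintype A] [Fintype B] [DecidableEq A] [DecidableEq B]
    (hA : Fintype.card A = a) (hB : Fintype.card B = b) :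
    ∑ c ∈ Finset.univ.filter (fun c : A ⊕ B → Col => IsGood c),
        (X : Polynomial ℤ) ^ ((Finset.univ.filter (fun z : A ⊕ B => c z = Col.G)).card
          + (Finset.univ.filter (fun z : A ⊕ B => c z = Col.W)).card)
      = ∑ i ∈ Finset.range (min a b + 1),
          C (((2 * i).choose i * a.choose i * b.choose i : ℕ) : ℤ) * X ^ i
            * (1 + X) ^ (a + b - 2 * i) := by
  subst hA hB
  have hrest : (univ.erase Col.R).erase Col.G = {Col.W, Col.K} := by decide
  calc _ = ∑ c : A ⊕ B → Col with IsCrossBalanced Col.R Col.G c, ∏ z, greenWhiteWeight (c z) :=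
        sum_congr (filter_congr fun _ _ => Iff.rfl) fun c _ => (prod_greenWhiteWeight c).symm
    _ = _ := sum_prod_crossBalanced (by decide) greenWhiteWeight
    _ = _ := sum_congr rfl fun i _ => by
        simp only [hrest, greenWhiteWeight, sum_pair (by decide : Col.W ≠ Col.K), one_mul,
          map_natCast]
        ring

theorem stmt_10 (a b : ℕ) (ha : 1 ≤ a) (hb : 1 ≤ b)
    (A B : Type) [Fintype A] [Fintype B] [DecidableEq A] [DecidableEq B]
    (hA : Fintype.card A = a) (hB : Fintype.card B = b) :
    ∑ c ∈ Finset.univ.filter (fun c : A ⊕ B → Col => IsGood c),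
        (X : Polynomial ℤ) ^ ((Finset.univ.filter (fun z : A ⊕ B => c z = Col.G)).card
          + (Finset.univ.filter (fun z : A ⊕ B => c z = Col.W)).card)
      = ∑ i ∈ Finset.range (min a b + 1),
          C (((2 * i).choose i * a.choose i * b.choose i : ℕ) : ℤ) * X ^ i
            * (1 + X) ^ (a + b - 2 * i) :=
  stmt_10_general a b A B hA hB
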